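/- Let κ ≥ 0 and c > 0, define H, h, g as above with these parameters, and let I ⊆ ℝ be an interval. Suppose ρ, E : I → ℝ are differentiable, ρ > 0 on I, and for all ξ ∈ I: −h(ρ(ξ))·ρ'(ξ) = E(ξ) and E'(ξ) = ρ(ξ) − exp(H(ρ(ξ))). Then the function ξ ↦ −E(ξ)²/2 + g(ρ(ξ)) is constant on I. -/

import Mathlib

/-- `H(ρ) = (c²/2)·(1 − 1/ρ²) − κ·ln ρ`. -/
noncomputable def Hfun (κ c ρ : ℝ) : ℝ := c ^ 2 / 2 * (1 - 1 / ρ ^ 2) - κ * Real.log ρ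

/-- `h(ρ) = c²/ρ³ − κ/ρ`. -/
noncomputable def hfun (κ c ρ : ℝ) : ℝ := c ^ 2 / ρ ^ 3 - κ / ρ

/-- `g(ρ) = c²/ρ + κ·ρ + exp(H(ρ))`. -/
noncomputable def gfun (κ c ρ : ℝ) : ℝ := c ^ 2 / ρ + κ * ρ + Real.exp (Hfun κ c ρ)

lemma Hfun_hasDerivAt (κ c x : ℝ) (hx : 0 < x) :
    HasDerivAt (Hfun κ c) (hfun κ c x) x := by
  have hx2 : x ^ 2 ≠ 0 := pow_ne_zero _ hx.ne'
  have h1 : HasDerivAt (fun y : ℝ => y ^ 2) (2 * x) x := by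
    simpa using hasDerivAt_pow 2 x
  have h2 : HasDerivAt (fun y : ℝ => 1 / y ^ 2) (-(2 * x) / (x ^ 2) ^ 2) x := by
    have h := h1.inv hx2
    simp only [one_div]
    exact h
  have h3 : HasDerivAt (fun y : ℝ => c ^ 2 / 2 * (1 - 1 / y ^ 2))
      (c ^ 2 / 2 * (0 - -(2 * x) / (x ^ 2) ^ 2)) x :=
    ((hasDerivAt_const x (1:ℝ)).sub h2).const_mul _
  have h4 : HasDerivAt (fun y : ℝ => κ * Real.log y) (κ * x⁻¹) x :=
    (Real.hasDerivAt_log hx.ne').const_mul κ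
  have := h3.sub h4
  refine this.congr_deriv ?_
  unfold hfun
  field_simp
  ring

lemma gfun_hasDerivAt (κ c x : ℝ) (hx : 0 < x) :
    HasDerivAt (gfun κ c)
      (-(c ^ 2) / x ^ 2 + κ + Real.exp (Hfun κ c x) * hfun κ c x) x := by
  have h1 : HasDerivAt (fun y : ℝ => c ^ 2 / y) (-(c ^ 2) / x ^ 2) x := by
    have := (hasDerivAt_id x).inv hx.ne'
    have h := this.const_mul (c ^ 2)
    simpa [div_eq_mul_inv, neg_div, sq] using h
  have h2 : HasDerivAt (fun y : ℝ => κ * y) κ x := by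
    simpa using (hasDerivAt_id x).const_mul κ
  have h3 : HasDerivAt (fun y : ℝ => Real.exp (Hfun κ c y))
      (Real.exp (Hfun κ c x) * hfun κ c x) x :=
    (Hfun_hasDerivAt κ c x hx).exp
  exact (h1.add h2).add h3

/-- along any solution of the first-order system
`−h(ρ)·ρ' = E`, `E' = ρ − exp(H(ρ))` on an interval `I`, the quantity
`−E²/2 + g(ρ)` is constant. -/
theorem stmt9 (κ c : ℝ) (hκ : 0 ≤ κ) (hc : 0 < c)
    (I : Set ℝ) (hI : I.OrdConnected)
    (ρ E ρ' E' : ℝ → ℝ)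
    (hρpos : ∀ ξ ∈ I, 0 < ρ ξ)
    (hρ : ∀ ξ ∈ I, HasDerivWithinAt ρ (ρ' ξ) I ξ)
    (hE : ∀ ξ ∈ I, HasDerivWithinAt E (E' ξ) I ξ)
    (heq1 : ∀ ξ ∈ I, -hfun κ c (ρ ξ) * ρ' ξ = E ξ)
    (heq2 : ∀ ξ ∈ I, E' ξ = ρ ξ - Real.exp (Hfun κ c (ρ ξ))) :
    ∀ ξ₁ ∈ I, ∀ ξ₂ ∈ I,
      -(E ξ₁) ^ 2 / 2 + gfun κ c (ρ ξ₁) = -(E ξ₂) ^ 2 / 2 + gfun κ c (ρ ξ₂) := by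
  set F : ℝ → ℝ := fun ξ => -(E ξ) ^ 2 / 2 + gfun κ c (ρ ξ) with hF
  have key : ∀ ξ ∈ I, HasDerivWithinAt F 0 I ξ := by
    intro ξ hξ
    have hpos := hρpos ξ hξ
    have hE2 : HasDerivWithinAt (fun ξ => -(E ξ) ^ 2 / 2) (-(E ξ * E' ξ)) I ξ := by
      have := ((hE ξ hξ).pow 2).neg.div_const 2
      refine this.congr_deriv ?_
      push_cast
      ring
    have hg : HasDerivWithinAt (fun ξ => gfun κ c (ρ ξ))
        ((-(c ^ 2) / (ρ ξ) ^ 2 + κ + Real.exp (Hfun κ c (ρ ξ)) * hfun κ c (ρ ξ)) * ρ' ξ) I ξ :=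
      (gfun_hasDerivAt κ c (ρ ξ) hpos).comp_hasDerivWithinAt ξ (hρ ξ hξ)
    have := hE2.add hg
    refine this.congr_deriv ?_
    rw [heq2 ξ hξ, ← heq1 ξ hξ]
    have hρne : ρ ξ ≠ 0 := hpos.ne'
    unfold hfun
    field_simp
    ring
  intro ξ₁ h₁ ξ₂ h₂
  have hconv : Convex ℝ I := hI.convex
  have bound : ∀ ξ ∈ I, ‖(1 : ℝ →L[ℝ] ℝ).smulRight (0 : ℝ)‖ ≤ 0 := by
    intro ξ _
    simp
  have := hconv.norm_image_sub_le_of_norm_hasFDerivWithin_le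
    (f' := fun _ => (1 : ℝ →L[ℝ] ℝ).smulRight (0 : ℝ))
    (fun ξ hξ => (key ξ hξ).hasFDerivWithinAt) bound h₂ h₁
  simpa [sub_eq_zero] using this
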